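/- (Energy conservation of CNFP) Let 0 < ε ≤ 1, τ > 0, and let V_j, A_{1,j} ∈ ℝ (j = 0,…,N) be time-independent. Suppose the sequence of periodic grid functions Φⁿ (n ≥ 0) satisfies the CNFP scheme: iδ⁺_tΦⁿ_j = −iσ₁ (D^f_x Φ^{n+1/2})_j + σ₃ Φ^{n+1/2}_j + ε(V_j I₂ − A_{1,j}σ₁)Φ^{n+1/2}_j for all j = 0,…,N−1 and n ≥ 0. Then the discrete energy ℰ^n_h = h ∑_{j=0}^{N−1} [ −i (Φⁿ_j)* σ₁ (D^f_x Φⁿ)_j + (Φⁿ_j)* σ₃ Φⁿ_j + ε V_j |Φⁿ_j|² − ε A_{1,j} (Φⁿ_j)* σ₁ Φⁿ_j ] satisfies ℰ^n_h = ℰ^0_h for all n ≥ 0. -/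

import Mathlib

open Complex Matrix Finset

noncomputable section

/-- The Pauli matrix σ₁. -/
def σ1 : Matrix (Fin 2) (Fin 2) ℂ := !![0, 1; 1, 0]

/-- The Pauli matrix σ₃. -/
def σ3 : Matrix (Fin 2) (Fin 2) ℂ := !![1, 0; 0, -1]

/-- The index set 𝒯_N = {−N/2, …, N/2−1}. -/
def TN (N : ℕ) : Finset ℤ := Finset.Icc (-(N : ℤ) / 2) ((N : ℤ) / 2 - 1)

/-- The Fourier frequency μ_l = 2πl/(b−a); `bma` stands for b−a. -/
def μ (bma : ℝ) (l : ℤ) : ℝ := 2 * Real.pi * l / bma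

/-- The Fourier pseudospectral derivative of a periodic grid function:
(D^f_x U)_j = (i/N) ∑_{k=0}^{N−1} ∑_{l∈𝒯_N} μ_l e^{2i(j−k)lπ/N} U_k. -/
def Dfx (N : ℕ) (bma : ℝ) (U : ℤ → Fin 2 → ℂ) (j : ℤ) : Fin 2 → ℂ :=
  (Complex.I / (N : ℂ)) • ∑ k ∈ Finset.range N, ∑ l ∈ TN N,
    ((μ bma l : ℝ) : ℂ) •
      (Complex.exp (2 * Complex.I * ((j : ℂ) - (k : ℂ)) * (l : ℂ) * (Real.pi : ℂ) / (N : ℂ)) •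
        U (k : ℤ))

/-- The time average Φ^{n+1/2}. -/
def mid (Φ : ℕ → ℤ → Fin 2 → ℂ) (n : ℕ) (j : ℤ) : Fin 2 → ℂ :=
  (2 : ℂ)⁻¹ • (Φ (n + 1) j + Φ n j)

/-- The discrete CNFP energy ℰⁿ_h. -/
def Ehp (h ε : ℝ) (N : ℕ) (bma : ℝ) (V A : ℤ → ℝ) (Φ : ℕ → ℤ → Fin 2 → ℂ) (n : ℕ) : ℂ :=
  (h : ℂ) * ∑ j ∈ Finset.range N,
    ((-Complex.I) * (star (Φ n (j : ℤ)) ⬝ᵥ σ1.mulVec (Dfx N bma (Φ n) (j : ℤ))) +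
      star (Φ n (j : ℤ)) ⬝ᵥ σ3.mulVec (Φ n (j : ℤ)) +
      ((ε * V (j : ℤ) : ℝ) : ℂ) * ((∑ i, ‖Φ n (j : ℤ) i‖ ^ 2 : ℝ) : ℂ) -
      ((ε * A (j : ℤ) : ℝ) : ℂ) * (star (Φ n (j : ℤ)) ⬝ᵥ σ1.mulVec (Φ n (j : ℤ))))

/-
The scheme is the Crank–Nicolson discretisation i(Φⁿ⁺¹ − Φⁿ)/τ = H Φ^{n+1/2} of the discrete
Dirac Hamiltonian H = −iσ₁D^f_x + σ₃ + ε(V − A σ₁), and ℰⁿ_h = h⟨Φⁿ, HΦⁿ⟩ for the l² form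
⟨u, v⟩ = ∑ⱼ uⱼ* vⱼ. H is Hermitian for this form: the kernel of D^f_x is skew-Hermitian (its
entries are i/N times a real combination of exponentials e^{2i(j−k)lπ/N}), and σ₃ + ε(V − A σ₁)
is a Hermitian matrix at each point. By sesquilinearity,
⟨Φⁿ⁺¹, HΦⁿ⁺¹⟩ − ⟨Φⁿ, HΦⁿ⟩ = 2 Re⟨Φⁿ⁺¹ − Φⁿ, HΦ^{n+1/2}⟩ = 2 Re((i/τ)‖Φⁿ⁺¹ − Φⁿ‖²) = 0.
-/

section CrankNicolson

variable {E : Type*} [AddCommGroup E] [Module ℂ E]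

theorem crankNicolson_energy_eq {B : E →ₗ⋆[ℂ] E →ₗ[ℂ] ℂ} {H : E →ₗ[ℂ] E} (hB : B.IsSymm)
    (hBH : (B.compl₂ H).IsSymm) {c : ℂ} (hc : star c = -c) {x y : E}
    (hstep : c • (y - x) = H ((2 : ℂ)⁻¹ • (y + x))) :
    B y (H y) = B x (H x) := by
  set d := y - x
  set m := (2 : ℂ)⁻¹ • (y + x)
  have hexpand : B y (H y) - B x (H x) = B d (H m) + B m (H d) := by
    simp only [d, m, map_sub, map_add, map_smul, LinearMap.sub_apply, LinearMap.add_apply,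
      LinearMap.map_smulₛₗ₂, map_inv₀, map_ofNat, smul_eq_mul]
    ring
  have hdm : B d (H m) = c * B d d := by rw [← hstep, map_smul, smul_eq_mul]
  have hmd : B m (H d) = star (B d (H m)) := (hBH.eq d m).symm
  have hdd : star (B d d) = B d d := hB.eq d d
  rw [← sub_eq_zero, hexpand, hmd, hdm, star_mul', hc, hdd]
  ring

end CrankNicolson

theorem star_star_dotProduct_mulVec {n α : Type*} [Fintype n] [CommSemiring α] [StarRing α]
    (M : Matrix n n α) (u v : n → α) : star (star u ⬝ᵥ M *ᵥ v) = star v ⬝ᵥ Mᴴ *ᵥ u := by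
  rw [star_dotProduct, star_star, star_mulVec, dotProduct_mulVec]

section GridOperators

variable {ι n : Type*} [Fintype n]

def gridForm (s : Finset ι) : (ι → n → ℂ) →ₗ⋆[ℂ] (ι → n → ℂ) →ₗ[ℂ] ℂ :=
  LinearMap.mk₂'ₛₗ (starRingEnd ℂ) (RingHom.id ℂ) (fun u v => ∑ j ∈ s, star (u j) ⬝ᵥ v j)
    (fun u u' v => by simp [add_dotProduct, sum_add_distrib])
    (fun c u v => by simp [smul_dotProduct, mul_sum])
    (fun u v v' => by simp [dotProduct_add, sum_add_distrib])
    (fun c u v => by simp [dotProduct_smul, mul_sum])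

theorem gridForm_apply (s : Finset ι) (u v : ι → n → ℂ) :
    gridForm s u v = ∑ j ∈ s, star (u j) ⬝ᵥ v j := rfl

theorem gridForm_isSymm (s : Finset ι) : (gridForm (n := n) s).IsSymm :=
  LinearMap.isSymm_def.mpr fun u v => by
    simp only [gridForm_apply, map_sum]
    exact sum_congr rfl fun j _ => (star_dotProduct _ _).symm

def pointwiseOp (M : ι → Matrix n n ℂ) : (ι → n → ℂ) →ₗ[ℂ] (ι → n → ℂ) :=
  LinearMap.pi fun j => (M j).mulVecLin ∘ₗ LinearMap.proj j

def blockKernelOp (s : Finset ι) (K : ι → ι → Matrix n n ℂ) : (ι → n → ℂ) →ₗ[ℂ] (ι → n → ℂ) :=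
  LinearMap.pi fun j => ∑ k ∈ s, (K j k).mulVecLin ∘ₗ LinearMap.proj k

theorem pointwiseOp_apply (M : ι → Matrix n n ℂ) (v : ι → n → ℂ) (j : ι) :
    pointwiseOp M v j = M j *ᵥ v j := rfl

theorem blockKernelOp_apply (s : Finset ι) (K : ι → ι → Matrix n n ℂ) (v : ι → n → ℂ) (j : ι) :
    blockKernelOp s K v j = ∑ k ∈ s, K j k *ᵥ v k := by
  simp [blockKernelOp]

theorem isSymm_gridForm_compl₂_pointwiseOp (s : Finset ι) {M : ι → Matrix n n ℂ}
    (hM : ∀ j, (M j).IsHermitian) : ((gridForm s).compl₂ (pointwiseOp M)).IsSymm :=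
  LinearMap.isSymm_def.mpr fun u v => by
    simp only [LinearMap.compl₂_apply, gridForm_apply, pointwiseOp_apply, map_sum,
      starRingEnd_apply, star_star_dotProduct_mulVec, (hM _).eq]

theorem isSymm_gridForm_compl₂_blockKernelOp (s : Finset ι) {K : ι → ι → Matrix n n ℂ}
    (hK : ∀ j k, (K k j)ᴴ = K j k) : ((gridForm s).compl₂ (blockKernelOp s K)).IsSymm :=
  LinearMap.isSymm_def.mpr fun u v => by
    simp only [LinearMap.compl₂_apply, gridForm_apply, blockKernelOp_apply, dotProduct_sum,
      map_sum, starRingEnd_apply, star_star_dotProduct_mulVec, hK]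
    exact sum_comm

end GridOperators

theorem σ1_isHermitian : σ1.IsHermitian := by
  ext i j; fin_cases i <;> fin_cases j <;> simp [σ1]

theorem σ3_isHermitian : σ3.IsHermitian := by
  ext i j; fin_cases i <;> fin_cases j <;> simp [σ3]

theorem ofReal_sum_norm_sq_eq_star_dotProduct {n : Type*} [Fintype n] (u : n → ℂ) :
    ((∑ i, ‖u i‖ ^ 2 : ℝ) : ℂ) = star u ⬝ᵥ u := by
  simp [dotProduct, Complex.conj_mul']

def gridIndices (N : ℕ) : Finset ℤ := (range N).map Nat.castEmbedding

theorem sum_gridIndices {M : Type*} [AddCommMonoid M] (N : ℕ) (f : ℤ → M) :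
    ∑ j ∈ gridIndices N, f j = ∑ j ∈ range N, f j := by
  simp [gridIndices]

def dfxKernel (N : ℕ) (bma : ℝ) (j k : ℤ) : ℂ :=
  I / N * ∑ l ∈ TN N, (μ bma l : ℂ) * exp (2 * I * (j - k) * l * Real.pi / N)

theorem Dfx_eq_sum_smul (N : ℕ) (bma : ℝ) (U : ℤ → Fin 2 → ℂ) (j : ℤ) :
    Dfx N bma U j = ∑ k ∈ gridIndices N, dfxKernel N bma j k • U k := by
  simp only [Dfx, dfxKernel, sum_gridIndices, smul_sum, sum_smul, smul_smul, mul_sum,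
    Int.cast_natCast]

theorem star_dfxKernel (N : ℕ) (bma : ℝ) (j k : ℤ) :
    star (dfxKernel N bma k j) = -dfxKernel N bma j k := by
  have hexp : ∀ l : ℤ,
      2 * -I * ((k : ℂ) - j) * l * Real.pi / N = 2 * I * (j - k) * l * Real.pi / N :=
    fun l => by ring
  simp only [dfxKernel, star_mul', star_sum, star_div₀, Complex.star_def, ← exp_conj, map_div₀,
    _root_.map_mul, map_sub, conj_I, conj_ofReal, map_intCast, map_natCast, map_ofNat, hexp]
  ring

def cnfpPotential (ε : ℝ) (V A : ℤ → ℝ) (j : ℤ) : Matrix (Fin 2) (Fin 2) ℂ :=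
  σ3 + ε • (V j • 1 - A j • σ1)

def cnfpHamiltonian (N : ℕ) (bma ε : ℝ) (V A : ℤ → ℝ) :
    (ℤ → Fin 2 → ℂ) →ₗ[ℂ] (ℤ → Fin 2 → ℂ) :=
  blockKernelOp (gridIndices N) (fun j k => (-I * dfxKernel N bma j k) • σ1) +
    pointwiseOp (cnfpPotential ε V A)

theorem cnfpHamiltonian_apply (N : ℕ) (bma ε : ℝ) (V A : ℤ → ℝ) (v : ℤ → Fin 2 → ℂ) (j : ℤ) :
    cnfpHamiltonian N bma ε V A v j = (-I) • σ1 *ᵥ Dfx N bma v j + σ3 *ᵥ v j +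
      (ε : ℂ) • ((V j : ℂ) • v j - (A j : ℂ) • σ1 *ᵥ v j) := by
  simp only [cnfpHamiltonian, LinearMap.add_apply, Pi.add_apply, blockKernelOp_apply,
    pointwiseOp_apply, cnfpPotential, Dfx_eq_sum_smul, mulVec_sum, smul_mulVec, mulVec_smul,
    smul_sum, smul_smul, add_mulVec, sub_mulVec, one_mulVec, ← Complex.coe_smul, add_assoc]

theorem isSymm_cnfpHamiltonian (N : ℕ) (bma ε : ℝ) (V A : ℤ → ℝ) :
    ((gridForm (gridIndices N)).compl₂ (cnfpHamiltonian N bma ε V A)).IsSymm := by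
  have hK : ∀ j k, ((-I * dfxKernel N bma k j) • σ1)ᴴ = (-I * dfxKernel N bma j k) • σ1 := by
    intro j k
    rw [conjTranspose_smul, σ1_isHermitian.eq, star_mul', star_dfxKernel]
    simp
  have hM : ∀ j, (cnfpPotential ε V A j).IsHermitian := fun j =>
    σ3_isHermitian.add (((isHermitian_one.smul (IsSelfAdjoint.all _)).sub
      (σ1_isHermitian.smul (IsSelfAdjoint.all _))).smul (IsSelfAdjoint.all _))
  have hsplit : ∀ H₁ H₂ : (ℤ → Fin 2 → ℂ) →ₗ[ℂ] (ℤ → Fin 2 → ℂ),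
      (gridForm (gridIndices N)).compl₂ (H₁ + H₂) =
        (gridForm (gridIndices N)).compl₂ H₁ + (gridForm (gridIndices N)).compl₂ H₂ :=
    fun _ _ => LinearMap.ext₂ fun _ _ => by
      simp only [LinearMap.compl₂_apply, LinearMap.add_apply, map_add]
  rw [cnfpHamiltonian, hsplit]
  exact (isSymm_gridForm_compl₂_blockKernelOp _ hK).add (isSymm_gridForm_compl₂_pointwiseOp _ hM)

theorem Ehp_eq_gridForm (h ε : ℝ) (N : ℕ) (bma : ℝ) (V A : ℤ → ℝ) (Φ : ℕ → ℤ → Fin 2 → ℂ)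
    (n : ℕ) : Ehp h ε N bma V A Φ n =
      h * gridForm (gridIndices N) (Φ n) (cnfpHamiltonian N bma ε V A (Φ n)) := by
  rw [Ehp, gridForm_apply, sum_gridIndices]
  congr 1
  refine sum_congr rfl fun j _ => ?_
  rw [cnfpHamiltonian_apply, ofReal_sum_norm_sq_eq_star_dotProduct]
  simp only [dotProduct_add, dotProduct_smul, dotProduct_sub, smul_eq_mul]
  push_cast
  ring

theorem cnfp_energy_conservation_general (a b : ℝ) (N : ℕ) (h : ℝ) (τ ε : ℝ)
    (V A : ℤ → ℝ)
    (Φ : ℕ → ℤ → Fin 2 → ℂ)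
    (hscheme : ∀ n : ℕ, ∀ j : ℤ,
      Complex.I • ((τ : ℂ)⁻¹ • (Φ (n + 1) j - Φ n j)) =
        (-Complex.I) • σ1.mulVec (Dfx N (b - a) (mid Φ n) j) + σ3.mulVec (mid Φ n j) +
          (ε : ℂ) • (((V j : ℝ) : ℂ) • mid Φ n j -
            ((A j : ℝ) : ℂ) • σ1.mulVec (mid Φ n j))) :
    ∀ n : ℕ, Ehp h ε N (b - a) V A Φ n = Ehp h ε N (b - a) V A Φ 0 := by
  intro n
  induction n with
  | zero => rfl
  | succ n ih =>
    rw [← ih, Ehp_eq_gridForm, Ehp_eq_gridForm]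
    have hstep : (I * (τ : ℂ)⁻¹) • (Φ (n + 1) - Φ n) =
        cnfpHamiltonian N (b - a) ε V A ((2 : ℂ)⁻¹ • (Φ (n + 1) + Φ n)) := by
      funext j
      rw [mul_smul, Pi.smul_apply, Pi.smul_apply, Pi.sub_apply, hscheme, ← cnfpHamiltonian_apply]
      rfl
    have hc : star (I * (τ : ℂ)⁻¹) = -(I * (τ : ℂ)⁻¹) := by simp
    rw [crankNicolson_energy_eq (gridForm_isSymm _) (isSymm_cnfpHamiltonian _ _ _ _ _) hc hstep]

/-- Energy conservation of the Crank–Nicolson Fourier pseudospectral (CNFP)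
method for the 1D Dirac equation with time-independent potentials. -/
theorem cnfp_energy_conservation (a b : ℝ) (hab : a < b) (N : ℕ) (hN : 0 < N)
    (hNe : Even N) (h : ℝ) (hh : h = (b - a) / N)
    (τ ε : ℝ) (hτ : 0 < τ) (hε0 : 0 < ε) (hε1 : ε ≤ 1)
    (V A : ℤ → ℝ)
    (hVper : ∀ j : ℤ, V (j + N) = V j) (hAper : ∀ j : ℤ, A (j + N) = A j)
    (Φ : ℕ → ℤ → Fin 2 → ℂ)
    (hper : ∀ n : ℕ, ∀ j : ℤ, Φ n (j + N) = Φ n j)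
    (hscheme : ∀ n : ℕ, ∀ j : ℤ,
      Complex.I • ((τ : ℂ)⁻¹ • (Φ (n + 1) j - Φ n j)) =
        (-Complex.I) • σ1.mulVec (Dfx N (b - a) (mid Φ n) j) + σ3.mulVec (mid Φ n j) +
          (ε : ℂ) • (((V j : ℝ) : ℂ) • mid Φ n j -
            ((A j : ℝ) : ℂ) • σ1.mulVec (mid Φ n j))) :
    ∀ n : ℕ, Ehp h ε N (b - a) V A Φ n = Ehp h ε N (b - a) V A Φ 0 :=
  cnfp_energy_conservation_general a b N h τ ε V A Φ hscheme

end
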